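/- Fix 0 ≤ l < m < ω and ordinals ε_0 ≥ … ≥ ε_m. Let δ = ω^{ω^{ε_0}}·…·ω^{ω^{ε_m}} and γ = ω^{ω^{ε_0}}·…·ω^{ω^{ε_l}}. If P is a tree with rank(P) = δ, then for every η < ω^{ω^{ε_{l+1}}}·…·ω^{ω^{ε_m}}, the separation function of the subtree P^{γ·η} \ P^{γ·(η+1)} (which has rank γ) coincides with the restriction of ς_P to Λ_2(P^{γ·η} \ P^{γ·(η+1)}). -/

import Mathlib

/-!
The derivatives of a block `Q = P^a \ P^b` are `Q^ξ = P^{a+ξ} \ P^b`: a node of `Q` with a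
successor in `P^{a+ξ}` has one in `Q`, since successors of a node outside `P^b` lie outside `P^b`.
For `a = γ·η` and `b = a + γ` this gives `rank Q = γ`. If `i ≤ l`, then `α_i` divides `γ`, say
`γ = α_i·c`, so the `α_i`-block `δ` of `Q` is the trace on `Q` of the `α_i`-block `c·η + δ` of `P`,
and every `α_i`-block of `P` meeting `Q` has index at least `c·η`. Hence `s, t ∈ Q` share an
`α_i`-block of `Q` iff they share one of `P`. Both separation values are at most `l` (witnessed by
the `γ`-block `0` of `Q` and the `γ`-block `η` of `P`), so they coincide.
-/

open Ordinal Set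

universe u

/-- The set of maximal elements ("leaves") of `P`. -/
def treeLeaves {α : Type u} [PartialOrder α] (P : Set α) : Set α :=
  {t ∈ P | ∀ s ∈ P, ¬ t < s}

/-- The derivative `P' = P \ Leaves P`. -/
def treeDeriv {α : Type u} [PartialOrder α] (P : Set α) : Set α :=
  P \ treeLeaves P

/-- The transfinite iterated derivative `P^ξ`. -/
noncomputable def derivIter {α : Type u} [PartialOrder α] (P : Set α) (ξ : Ordinal.{u}) :
    Set α :=
  Ordinal.limitRecOn ξ P (fun _ ih => treeDeriv ih)
    (fun o _ ih => ⋂ (ζ : Set.Iio o), ih ζ.1 ζ.2)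

/-- `P` is a tree: every ancestor set is well-ordered (a well-founded chain). -/
def IsTree {α : Type u} [PartialOrder α] (P : Set α) : Prop :=
  ∀ t ∈ P, IsChain (· ≤ ·) {s ∈ P | s ≤ t} ∧ {s ∈ P | s ≤ t}.WellFoundedOn (· < ·)

/-- `P` is well-founded: some transfinite derivative is empty. -/
def IsWFTree {α : Type u} [PartialOrder α] (P : Set α) : Prop :=
  ∃ ξ : Ordinal.{u}, derivIter P ξ = ∅

/-- The rank of a well-founded tree: the least `ξ` with `P^ξ = ∅`. -/
noncomputable def treeRank {α : Type u} [PartialOrder α] (P : Set α) : Ordinal.{u} :=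
  sInf {ξ | derivIter P ξ = ∅}

/-- `τ_P(t)`: the largest ordinal `ξ` with `t ∈ P^ξ`. -/
noncomputable def treeTau {α : Type u} [PartialOrder α] (P : Set α) (t : α) : Ordinal.{u} :=
  sSup {ξ | t ∈ derivIter P ξ}

/-- `τ_{P,β}(t)`: the largest ordinal `ξ` with `t ∈ P^{β·ξ}`. -/
noncomputable def treeTauMul {α : Type u} [PartialOrder α] (P : Set α) (β : Ordinal.{u})
    (t : α) : Ordinal.{u} :=
  sSup {ξ | t ∈ derivIter P (β * ξ)}

/-- `alpProd ε i = ω^{ω^{ε 0}} · ⋯ · ω^{ω^{ε i}}`. -/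
noncomputable def alpProd (ε : ℕ → Ordinal.{u}) : ℕ → Ordinal.{u}
  | 0 => omega0 ^ omega0 ^ ε 0
  | (i + 1) => alpProd ε i * omega0 ^ omega0 ^ ε (i + 1)

/-- The separation function `ς_P` of a tree whose rank has decomposition
`ω^{ω^{ε 0}} ⋯ ω^{ω^{ε l}}`: the least `i` such that `s, t` lie in the same block
`P^{α_i·δ} \ P^{α_i·(δ+1)}` for some ordinal `δ`. -/
noncomputable def sep {α : Type u} [PartialOrder α] (P : Set α) (ε : ℕ → Ordinal.{u})
    (s t : α) : ℕ :=
  sInf {i : ℕ | ∃ δ : Ordinal.{u},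
    s ∈ derivIter P (alpProd ε i * δ) \ derivIter P (alpProd ε i * (δ + 1)) ∧
    t ∈ derivIter P (alpProd ε i * δ) \ derivIter P (alpProd ε i * (δ + 1))}

/-- `indProd ε A l = ω^{ω^{ε 0}·1_A(0)} ⋯ ω^{ω^{ε l}·1_A(l)}`. -/
noncomputable def indProd (ε : ℕ → Ordinal.{u}) (A : Set ℕ) : ℕ → Ordinal.{u}
  | 0 => omega0 ^ (omega0 ^ ε 0 * A.indicator (fun _ => (1 : Ordinal.{u})) 0)
  | (i + 1) => indProd ε A i *
      omega0 ^ (omega0 ^ ε (i + 1) * A.indicator (fun _ => (1 : Ordinal.{u})) (i + 1))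

/-- `sumPow ε i = ω^{ε 0} + ⋯ + ω^{ε (i-1)}` (the partial sums `γ_i`). -/
noncomputable def sumPow (ε : ℕ → Ordinal.{u}) : ℕ → Ordinal.{u}
  | 0 => 0
  | (i + 1) => sumPow ε i + omega0 ^ ε i

/-- `indSum ε A i = Σ_{n < i} 1_A(n)·ω^{ε n}`. -/
noncomputable def indSum (ε : ℕ → Ordinal.{u}) (A : Set ℕ) : ℕ → Ordinal.{u}
  | 0 => 0
  | (i + 1) => indSum ε A i + A.indicator (fun _ => (1 : Ordinal.{u})) i * omega0 ^ ε i

section Derivatives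

variable {α : Type u} [PartialOrder α]

theorem derivIter_zero (P : Set α) : derivIter P 0 = P := by
  simp [derivIter]

theorem derivIter_add_one (P : Set α) (o : Ordinal.{u}) :
    derivIter P (o + 1) = treeDeriv (derivIter P o) := by
  rw [derivIter, Ordinal.limitRecOn_add_one]
  rfl

theorem derivIter_of_isSuccLimit (P : Set α) {o : Ordinal.{u}} (h : Order.IsSuccLimit o) :
    derivIter P o = ⋂ ζ : Iio o, derivIter P ζ.1 := by
  rw [derivIter, Ordinal.limitRecOn_limit _ _ _ _ h]
  rfl

theorem mem_treeDeriv {P : Set α} {x : α} : x ∈ treeDeriv P ↔ x ∈ P ∧ ∃ s ∈ P, x < s := by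
  simp only [treeDeriv, treeLeaves, mem_sdiff, mem_sep_iff, not_and, not_forall, not_not,
    exists_prop]
  exact and_congr_right fun hx => ⟨fun h => h hx, fun h _ => h⟩

theorem derivIter_antitone (P : Set α) : Antitone (derivIter P) := by
  intro a b hab
  induction b using Ordinal.limitRecOn with
  | zero => rw [nonpos_iff_eq_zero.mp hab]
  | add_one o ih =>
    rcases (Order.le_succ_iff_eq_or_le.mp hab) with h | h
    · exact h ▸ subset_rfl
    · rw [derivIter_add_one]
      exact sdiff_subset.trans (ih h)
  | limit o ho ih =>
    rcases eq_or_lt_of_le hab with h | h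
    · exact h ▸ subset_rfl
    · rw [derivIter_of_isSuccLimit P ho]
      exact iInter_subset_of_subset ⟨a, h⟩ subset_rfl

theorem derivIter_subset (P : Set α) (ξ : Ordinal.{u}) : derivIter P ξ ⊆ P := by
  simpa only [derivIter_zero] using derivIter_antitone P zero_le

theorem mem_derivIter_of_lt {P : Set α} {s t : α} (hs : s ∈ P) (hst : s < t) :
    ∀ {ξ : Ordinal.{u}}, t ∈ derivIter P ξ → s ∈ derivIter P ξ := by
  intro ξ
  induction ξ using Ordinal.limitRecOn with
  | zero => rw [derivIter_zero]; exact fun _ => hs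
  | add_one o ih =>
    simp only [derivIter_add_one, mem_treeDeriv]
    rintro ⟨ht, -⟩
    exact ⟨ih ht, t, ht, hst⟩
  | limit o ho ih =>
    simp only [derivIter_of_isSuccLimit P ho, mem_iInter]
    exact fun ht ζ => ih ζ.1 ζ.2 (ht ζ)

theorem derivIter_add_of_isSuccLimit (P : Set α) (a : Ordinal.{u}) {ξ : Ordinal.{u}}
    (hξ : Order.IsSuccLimit ξ) :
    derivIter P (a + ξ) = ⋂ ζ : Iio ξ, derivIter P (a + ζ.1) := by
  rw [derivIter_of_isSuccLimit P (Ordinal.isSuccLimit_add a hξ)]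
  ext x
  simp only [mem_iInter]
  refine ⟨fun hx ζ => hx ⟨a + ζ.1, add_lt_add_right ζ.2 a⟩, fun hx ⟨z, hz⟩ => ?_⟩
  rcases le_or_gt z a with hza | hza
  · exact derivIter_antitone P (by simpa using hza) (hx ⟨0, hξ.bot_lt⟩)
  · have hz' : a + (z - a) = z := Ordinal.add_sub_cancel_of_le hza.le
    have hlt : z - a < ξ := by rwa [← add_lt_add_iff_left a, hz']
    simpa only [hz'] using hx ⟨z - a, hlt⟩

theorem derivIter_diff (P : Set α) (a b ξ : Ordinal.{u}) :
    derivIter (derivIter P a \ derivIter P b) ξ = derivIter P (a + ξ) \ derivIter P b := by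
  induction ξ using Ordinal.limitRecOn with
  | zero => rw [derivIter_zero, add_zero]
  | add_one o ih =>
    rw [derivIter_add_one, ih, ← add_assoc, derivIter_add_one]
    ext x
    simp only [mem_treeDeriv, mem_sdiff]
    constructor
    · rintro ⟨⟨hx, hxb⟩, s, ⟨hs, -⟩, hxs⟩
      exact ⟨⟨hx, s, hs, hxs⟩, hxb⟩
    · rintro ⟨⟨hx, s, hs, hxs⟩, hxb⟩
      have hsb : s ∉ derivIter P b :=
        fun hsb => hxb (mem_derivIter_of_lt (derivIter_subset P _ hx) hxs hsb)
      exact ⟨⟨hx, hxb⟩, s, ⟨hs, hsb⟩, hxs⟩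
  | limit o ho ih =>
    rw [derivIter_of_isSuccLimit _ ho, derivIter_add_of_isSuccLimit P a ho]
    ext x
    simp only [mem_iInter, mem_sdiff]
    constructor
    · intro h
      have h0 := h ⟨0, ho.bot_lt⟩
      rw [ih 0 ho.bot_lt] at h0
      refine ⟨fun ζ => ?_, h0.2⟩
      have hζ := h ζ
      rw [ih ζ.1 ζ.2] at hζ
      exact hζ.1
    · rintro ⟨h1, h2⟩ ζ
      rw [ih ζ.1 ζ.2]
      exact ⟨h1 ζ, h2⟩

theorem derivIter_add_eq_of_add_one_eq (P : Set α) {a : Ordinal.{u}}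
    (h : derivIter P (a + 1) = derivIter P a) (ζ : Ordinal.{u}) :
    derivIter P (a + ζ) = derivIter P a := by
  induction ζ using Ordinal.limitRecOn with
  | zero => rw [add_zero]
  | add_one o ih => rw [← add_assoc, derivIter_add_one, ih, ← derivIter_add_one, h]
  | limit o ho ih =>
    rw [derivIter_add_of_isSuccLimit P a ho]
    exact subset_antisymm (iInter_subset_of_subset ⟨0, ho.bot_lt⟩ (by rw [add_zero]))
      (subset_iInter fun ζ => (ih ζ.1 ζ.2).ge)

theorem derivIter_treeRank (P : Set α) (hWF : IsWFTree P) : derivIter P (treeRank P) = ∅ :=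
  csInf_mem hWF

theorem derivIter_ne_empty_of_lt_treeRank (P : Set α) {ξ : Ordinal.{u}} (h : ξ < treeRank P) :
    derivIter P ξ ≠ ∅ :=
  fun he => (csInf_le' (s := {ξ | derivIter P ξ = ∅}) he).not_gt h

theorem treeRank_eq_of_derivIter_eq_empty (P : Set α) {γ : Ordinal.{u}} (hγ : derivIter P γ = ∅)
    (hne : ∀ ξ < γ, derivIter P ξ ≠ ∅) : treeRank P = γ :=
  IsLeast.csInf_eq ⟨hγ, fun _ hξ => not_lt.mp fun hlt => hne _ hlt hξ⟩

theorem derivIter_diff_nonempty (P : Set α) (hWF : IsWFTree P) {a b : Ordinal.{u}}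
    (hab : a < b) (ha : a < treeRank P) : (derivIter P a \ derivIter P b).Nonempty := by
  rw [nonempty_iff_ne_empty, Ne, sdiff_eq_empty]
  intro hsub
  have hstable : derivIter P (a + 1) = derivIter P a :=
    (derivIter_antitone P le_self_add).antisymm
      (hsub.trans (derivIter_antitone P (Order.add_one_le_of_lt hab)))
  have hempty := derivIter_add_eq_of_add_one_eq P hstable (treeRank P - a)
  rw [Ordinal.add_sub_cancel_of_le ha.le, derivIter_treeRank P hWF] at hempty
  exact derivIter_ne_empty_of_lt_treeRank P ha hempty.symm

theorem treeRank_derivIter_diff (P : Set α) (hWF : IsWFTree P) {a γ : Ordinal.{u}}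
    (h : a + γ ≤ treeRank P) :
    treeRank (derivIter P a \ derivIter P (a + γ)) = γ := by
  refine treeRank_eq_of_derivIter_eq_empty _ (by rw [derivIter_diff, sdiff_self]) fun ξ hξ => ?_
  have hlt : a + ξ < a + γ := add_lt_add_right hξ a
  rw [derivIter_diff, ← nonempty_iff_ne_empty]
  exact derivIter_diff_nonempty P hWF hlt (hlt.trans_le h)

def derivBlock (P : Set α) (β δ : Ordinal.{u}) : Set α :=
  derivIter P (β * δ) \ derivIter P (β * (δ + 1))

theorem treeRank_derivBlock (P : Set α) (hWF : IsWFTree P) {β δ : Ordinal.{u}}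
    (h : β * (δ + 1) ≤ treeRank P) : treeRank (derivBlock P β δ) = β := by
  rw [mul_add_one] at h
  rw [derivBlock, mul_add_one]
  exact treeRank_derivIter_diff P hWF h

theorem derivBlock_derivBlock_zero (P : Set α) (β δ : Ordinal.{u}) :
    derivBlock (derivBlock P β δ) β 0 = derivBlock P β δ := by
  rw [derivBlock, mul_zero, zero_add, mul_one, derivIter_zero, derivBlock, derivIter_diff,
    ← mul_add_one, sdiff_self, sdiff_empty]

theorem mem_derivBlock_derivBlock_iff {P : Set α} {β c η δ : Ordinal.{u}} {x : α}
    (hx : x ∉ derivIter P (β * c * (η + 1))) :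
    x ∈ derivBlock (derivBlock P (β * c) η) β δ ↔ x ∈ derivBlock P β (c * η + δ) := by
  rw [mul_assoc] at hx
  simp only [derivBlock, derivIter_diff, mem_sdiff, mul_assoc, ← mul_add, add_assoc, hx,
    not_false_eq_true, and_true]

theorem le_of_mem_derivIter_of_mem_derivBlock {P : Set α} {β x δ : Ordinal.{u}} {s : α}
    (hx : s ∈ derivIter P (β * x)) (hδ : s ∈ derivBlock P β δ) : x ≤ δ :=
  not_lt.mp fun hlt =>
    hδ.2 (derivIter_antitone P (mul_le_mul_right (Order.add_one_le_of_lt hlt) β) hx)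

theorem exists_mem_derivBlock_derivBlock_iff {P : Set α} {β c η : Ordinal.{u}} {s t : α}
    (hs : s ∈ derivBlock P (β * c) η) (ht : t ∈ derivBlock P (β * c) η) :
    (∃ δ, s ∈ derivBlock (derivBlock P (β * c) η) β δ ∧
        t ∈ derivBlock (derivBlock P (β * c) η) β δ) ↔
      ∃ δ, s ∈ derivBlock P β δ ∧ t ∈ derivBlock P β δ := by
  simp only [mem_derivBlock_derivBlock_iff hs.2, mem_derivBlock_derivBlock_iff ht.2]
  constructor
  · rintro ⟨δ, hsδ, htδ⟩
    exact ⟨c * η + δ, hsδ, htδ⟩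
  · rintro ⟨δ, hsδ, htδ⟩
    have hle : c * η ≤ δ :=
      le_of_mem_derivIter_of_mem_derivBlock (by rw [← mul_assoc]; exact hs.1) hsδ
    refine ⟨δ - c * η, ?_⟩
    rw [Ordinal.add_sub_cancel_of_le hle]
    exact ⟨hsδ, htδ⟩

theorem sep_eq (P : Set α) (ε : ℕ → Ordinal.{u}) (s t : α) :
    sep P ε s t =
      sInf {i | ∃ δ, s ∈ derivBlock P (alpProd ε i) δ ∧ t ∈ derivBlock P (alpProd ε i) δ} :=
  rfl

end Derivatives

theorem alpProd_add (ε : ℕ → Ordinal.{u}) (l k : ℕ) :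
    alpProd ε (l + 1 + k) = alpProd ε l * alpProd (fun i => ε (l + 1 + i)) k := by
  induction k with
  | zero => rfl
  | succ k ih => rw [← add_assoc, alpProd, ih, alpProd, mul_assoc]; rfl

theorem alpProd_dvd_alpProd (ε : ℕ → Ordinal.{u}) {i l : ℕ} (hil : i ≤ l) :
    alpProd ε i ∣ alpProd ε l := by
  induction l, hil using Nat.le_induction with
  | base => exact dvd_rfl
  | succ l _ ih => exact Dvd.dvd.mul_right ih _

theorem Nat.sInf_eq_sInf_of_mem_of_forall_le {S T : Set ℕ} {l : ℕ} (hS : l ∈ S) (hT : l ∈ T)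
    (h : ∀ i ≤ l, i ∈ S ↔ i ∈ T) : sInf S = sInf T :=
  le_antisymm (Nat.sInf_le ((h _ (Nat.sInf_le hT)).mpr (Nat.sInf_mem ⟨l, hT⟩)))
    (Nat.sInf_le ((h _ (Nat.sInf_le hS)).mp (Nat.sInf_mem ⟨l, hS⟩)))

theorem statement13_general {α : Type u} [PartialOrder α] (l m : ℕ) (hlm : l < m)
    (ε : ℕ → Ordinal.{u})
    (P : Set α) (hWF : IsWFTree P)
    (hrank : treeRank P = alpProd ε m)
    (η : Ordinal.{u}) (hη : η < alpProd (fun i => ε (l + 1 + i)) (m - (l + 1))) :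
    treeRank (derivIter P (alpProd ε l * η) \ derivIter P (alpProd ε l * (η + 1))) =
      alpProd ε l ∧
    ∀ s ∈ derivIter P (alpProd ε l * η) \ derivIter P (alpProd ε l * (η + 1)),
      ∀ t ∈ derivIter P (alpProd ε l * η) \ derivIter P (alpProd ε l * (η + 1)),
        s < t →
        sep (derivIter P (alpProd ε l * η) \ derivIter P (alpProd ε l * (η + 1)))
            ε s t = sep P ε s t := by
  set γ := alpProd ε l
  have hrank_eq : treeRank P = γ * alpProd (fun i => ε (l + 1 + i)) (m - (l + 1)) := by
    rw [hrank, ← alpProd_add, Nat.add_sub_cancel' hlm]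
  have hblock_le : γ * (η + 1) ≤ treeRank P := by
    rw [hrank_eq]
    exact mul_le_mul_right (Order.add_one_le_of_lt hη) γ
  refine ⟨treeRank_derivBlock P hWF hblock_le, fun s hs t ht _ => ?_⟩
  change sep (derivBlock P γ η) ε s t = sep P ε s t
  rw [sep_eq, sep_eq]
  refine Nat.sInf_eq_sInf_of_mem_of_forall_le (l := l) ⟨0, ?_, ?_⟩ ⟨η, hs, ht⟩ fun i hil => ?_
  · rwa [derivBlock_derivBlock_zero]
  · rwa [derivBlock_derivBlock_zero]
  · obtain ⟨c, hc⟩ := alpProd_dvd_alpProd ε hil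
    simp only [γ, hc] at hs ht ⊢
    exact exists_mem_derivBlock_derivBlock_iff hs ht

/-- if `rank(P) = ω^{ω^{ε_0}}⋯ω^{ω^{ε_m}}` and
`γ = ω^{ω^{ε_0}}⋯ω^{ω^{ε_l}}` for `l < m`, then for every
`η < ω^{ω^{ε_{l+1}}}⋯ω^{ω^{ε_m}}` the block `P^{γ·η} \ P^{γ·(η+1)}` has rank `γ`
and its separation function agrees with the restriction of `ς_P`. -/
theorem statement13 {α : Type u} [PartialOrder α] (l m : ℕ) (hlm : l < m)
    (ε : ℕ → Ordinal.{u}) (hε : ∀ i < m, ε (i + 1) ≤ ε i)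
    (P : Set α) (hP : IsTree P) (hWF : IsWFTree P)
    (hrank : treeRank P = alpProd ε m)
    (η : Ordinal.{u}) (hη : η < alpProd (fun i => ε (l + 1 + i)) (m - (l + 1))) :
    treeRank (derivIter P (alpProd ε l * η) \ derivIter P (alpProd ε l * (η + 1))) =
      alpProd ε l ∧
    ∀ s ∈ derivIter P (alpProd ε l * η) \ derivIter P (alpProd ε l * (η + 1)),
      ∀ t ∈ derivIter P (alpProd ε l * η) \ derivIter P (alpProd ε l * (η + 1)),
        s < t →
        sep (derivIter P (alpProd ε l * η) \ derivIter P (alpProd ε l * (η + 1)))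
            ε s t = sep P ε s t :=
  statement13_general l m hlm ε P hWF hrank η hη
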